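/- arXiv:math/0005079 — 3 statements merged into one kernel-verified Lean document; each statement's English description precedes it below -/
import Mathlib

section
/- Let H be an index-two normal subgroup of a finite group K, and let U be an irreducible real H-module whose character is K-invariant. If W is a K-module whose restriction to H is isomorphic to U (a K-extension of U), then W is irreducible, and m(W)·d(W) = d(U), where m(W) is the multiplicity of W in the induced module Ind_H^K U, d(W) = dim_R Hom_K(W,W), and d(U) = dim_R Hom_H(U,U). -/
/-!
Since `Res_H W ≅ U` is irreducible, so is `W`. Frobenius reciprocity gives
`Hom_K(W, Ind_H^K U) ≅ Hom_H(Res_H W, U) ≅ Hom_H(U, U)`, so everything reduces to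
`d(W) ∣ d(U)`.
By Schur's lemma `End_K(W)` is a real division algebra; it sits inside `End_H(W) ≅ End_H(U)`,
which is therefore a left vector space over it, and the tower law gives
`d(U) = d(W) · dim_{End_K(W)} End_H(W)`.
-/

open Module

/-- Restriction of a representation to a subgroup. -/
def resRep {K : Type*} [Group K] (H : Subgroup K) {U : Type*} [AddCommGroup U] [Module ℝ U]
    (ψ : Representation ℝ K U) : Representation ℝ H U :=
  ψ.comp H.subtype

/-- A representation is irreducible: nonzero space and no proper nonzero invariant submodule. -/
def IsIrreducibleRep {G U : Type*} [Group G] [AddCommGroup U] [Module ℝ U]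
    (ρ : Representation ℝ G U) : Prop :=
  (∃ u : U, u ≠ 0) ∧
    ∀ p : Submodule ℝ U, (∀ (g : G) (u : U), u ∈ p → ρ g u ∈ p) → p = ⊥ ∨ p = ⊤

/-- The space of equivariant linear maps between two representations. -/
def repHom {G U V : Type*} [Group G] [AddCommGroup U] [Module ℝ U] [AddCommGroup V]
    [Module ℝ V] (ρ : Representation ℝ G U) (ψ : Representation ℝ G V) :
    Submodule ℝ (U →ₗ[ℝ] V) where
  carrier := {f | ∀ (g : G) (u : U), f (ρ g u) = ψ g (f u)}
  add_mem' := by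
    intro f f' hf hf' g u
    simp [hf g u, hf' g u]
  zero_mem' := by intro g u; simp
  smul_mem' := by
    intro c f hf g u
    simp [hf g u]

/-- Isomorphism of representations. -/
def RepIso {G U V : Type*} [Group G] [AddCommGroup U] [Module ℝ U] [AddCommGroup V]
    [Module ℝ V] (ρ : Representation ℝ G U) (ψ : Representation ℝ G V) : Prop :=
  ∃ e : U ≃ₗ[ℝ] V, ∀ (g : G) (u : U), e (ρ g u) = ψ g (e u)

/-- The character of a representation of a subgroup is invariant under conjugation by the
ambient group. -/
def charConjInvariant {K U : Type*} [Group K] [AddCommGroup U] [Module ℝ U] (H : Subgroup K)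
    (ρ : Representation ℝ H U) : Prop :=
  ∀ (g : K) (h k : H), (k : K) = g⁻¹ * h * g →
    LinearMap.trace ℝ U (ρ k) = LinearMap.trace ℝ U (ρ h)

/-- The carrier of the induced representation `Ind_H^K U`. -/
def indSubmodule {K U : Type*} [Group K] [AddCommGroup U] [Module ℝ U] (H : Subgroup K)
    (ρ : Representation ℝ H U) : Submodule ℝ (K → U) where
  carrier := {f | ∀ (h : H) (k : K), f (h * k) = ρ h (f k)}
  add_mem' := by
    intro f f' hf hf' h k
    simp [hf h k, hf' h k]
  zero_mem' := by intro h k; simp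
  smul_mem' := by
    intro c f hf h k
    simp [hf h k]

/-- The induced representation `Ind_H^K U`. -/
def indRep {K U : Type*} [Group K] [AddCommGroup U] [Module ℝ U] (H : Subgroup K)
    (ρ : Representation ℝ H U) : Representation ℝ K (indSubmodule H ρ) where
  toFun g :=
    { toFun := fun f => ⟨fun k => f.1 (k * g), by
        intro h k
        dsimp only
        rw [mul_assoc]
        exact f.2 h (k * g)⟩
      map_add' := by intro f f'; rfl
      map_smul' := by intro c f; rfl }
  map_one' := by
    refine LinearMap.ext fun f => Subtype.ext (funext fun k => ?_)
    simp
  map_mul' := by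
    intro g g'
    refine LinearMap.ext fun f => Subtype.ext (funext fun k => ?_)
    simp [mul_assoc]

/-- The direct sum of two copies of a representation. -/
def doubleRep {G U : Type*} [Group G] [AddCommGroup U] [Module ℝ U]
    (ρ : Representation ℝ G U) : Representation ℝ G (U × U) where
  toFun g := (ρ g).prodMap (ρ g)
  map_one' := by
    refine LinearMap.ext fun u => ?_
    simp
  map_mul' := by
    intro g g'
    refine LinearMap.ext fun u => ?_
    simp [Module.End.mul_apply]

/-- The real dimension of the space of equivariant linear maps. -/
noncomputable def dimRepHom {G U V : Type*} [Group G] [AddCommGroup U] [Module ℝ U]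
    [AddCommGroup V] [Module ℝ V] (ρ : Representation ℝ G U)
    (ψ : Representation ℝ G V) : ℕ :=
  Module.finrank ℝ (repHom ρ ψ)


variable {G U V : Type*} [Group G] [AddCommGroup U] [Module ℝ U] [AddCommGroup V] [Module ℝ V]

theorem symm_apply_of_intertwines {ρ : Representation ℝ G U} {σ : Representation ℝ G V}
    {e : U ≃ₗ[ℝ] V} (he : ∀ g u, e (ρ g u) = σ g (e u)) (g : G) (v : V) :
    e.symm (σ g v) = ρ g (e.symm v) := by
  rw [e.symm_apply_eq, he, e.apply_symm_apply]

theorem RepIso.refl (ρ : Representation ℝ G U) : RepIso ρ ρ :=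
  ⟨LinearEquiv.refl ℝ U, fun _ _ => rfl⟩

theorem IsIrreducibleRep.of_repIso {ρ : Representation ℝ G U} {σ : Representation ℝ G V}
    (hiso : RepIso ρ σ) (hσ : IsIrreducibleRep σ) : IsIrreducibleRep ρ := by
  obtain ⟨e, he⟩ := hiso
  obtain ⟨⟨v, hv⟩, hσ_simple⟩ := hσ
  refine ⟨⟨e.symm v, by simpa using hv⟩, fun p hp => ?_⟩
  have hp_eq : p = (p.comap (e.symm : V →ₗ[ℝ] U)).comap (e : U →ₗ[ℝ] V) := by ext; simp
  have hq : ∀ g v, v ∈ p.comap (e.symm : V →ₗ[ℝ] U) →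
      σ g v ∈ p.comap (e.symm : V →ₗ[ℝ] U) := fun g v hv => by
    simpa [Submodule.mem_comap, symm_apply_of_intertwines he] using hp g _ hv
  rcases hσ_simple _ hq with h | h
  · left; rw [hp_eq, h, Submodule.comap_bot]; exact e.ker
  · right; rw [hp_eq, h, Submodule.comap_top]

theorem IsIrreducibleRep.of_resRep {H : Subgroup G} {ψ : Representation ℝ G U}
    (h : IsIrreducibleRep (resRep H ψ)) : IsIrreducibleRep ψ :=
  ⟨h.1, fun p hp => h.2 p fun g => hp g⟩

section Hom

variable {U' V' : Type*} [AddCommGroup U'] [Module ℝ U'] [AddCommGroup V'] [Module ℝ V']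
  {ρ : Representation ℝ G U} {σ : Representation ℝ G V}
  {ρ' : Representation ℝ G U'} {σ' : Representation ℝ G V'}

def repHomCongr (eU : U ≃ₗ[ℝ] U') (eV : V ≃ₗ[ℝ] V')
    (hU : ∀ g u, eU (ρ g u) = ρ' g (eU u)) (hV : ∀ g v, eV (σ g v) = σ' g (eV v)) :
    repHom ρ σ ≃ₗ[ℝ] repHom ρ' σ' :=
  (eU.arrowCongr eV).ofSubmodules _ _ <| by
    ext f
    rw [Submodule.mem_map_equiv]
    simp only [repHom, Submodule.mem_mk, AddSubmonoid.mem_mk, AddSubsemigroup.mem_mk,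
      Set.mem_ofPred_eq, LinearEquiv.arrowCongr_symm_apply]
    simp only [hU, ← symm_apply_of_intertwines hV, eV.symm.injective.eq_iff]
    exact forall_congr' fun g =>
      (eU.surjective.forall (p := fun u => f (ρ' g u) = σ' g (f u))).symm

theorem dimRepHom_congr (hρ : RepIso ρ ρ') (hσ : RepIso σ σ') :
    dimRepHom ρ σ = dimRepHom ρ' σ' := by
  obtain ⟨eU, hU⟩ := hρ
  obtain ⟨eV, hV⟩ := hσ
  exact (repHomCongr eU eV hU hV).finrank_eq

end Hom

section Frobenius

variable {H : Subgroup G} {ρ : Representation ℝ H U} {ψ : Representation ℝ G V}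

def indRepFrobeniusEquiv : repHom ψ (indRep H ρ) ≃ₗ[ℝ] repHom (resRep H ψ) ρ where
  toFun F := ⟨(LinearMap.proj 1).comp ((indSubmodule H ρ).subtype.comp F.1), fun h w => by
    change (F.1 (ψ h w)).1 1 = ρ h ((F.1 w).1 1)
    rw [F.2, ← (F.1 w).2 h 1]
    simp [indRep]⟩
  invFun φ :=
    ⟨{ toFun := fun w => ⟨fun k => φ.1 (ψ k w), fun h k => by
          dsimp only
          rw [map_mul, Module.End.mul_apply]
          exact φ.2 h (ψ k w)⟩
       map_add' := fun w w' => Subtype.ext (funext fun k => by simp)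
       map_smul' := fun c w => Subtype.ext (funext fun k => by simp) },
     fun g w => Subtype.ext (funext fun k => by simp [indRep])⟩
  map_add' F F' := rfl
  map_smul' c F := rfl
  left_inv F := by
    refine Subtype.ext (LinearMap.ext fun w => Subtype.ext (funext fun k => ?_))
    change (F.1 (ψ k w)).1 1 = (F.1 w).1 k
    rw [F.2]
    simp [indRep]
  right_inv φ := Subtype.ext (LinearMap.ext fun w => by simp)

theorem dimRepHom_indRep : dimRepHom ψ (indRep H ρ) = dimRepHom (resRep H ψ) ρ :=
  indRepFrobeniusEquiv.finrank_eq

end Frobenius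

section Schur

variable {ψ : Representation ℝ G V}

def repEndAlg (ψ : Representation ℝ G V) : Subalgebra ℝ (Module.End ℝ V) :=
  (repHom ψ ψ).toSubalgebra (fun _ _ => rfl) fun a b ha hb g v => by
    rw [Module.End.mul_apply, hb g v, ha g (b v)]; rfl

theorem finrank_repEndAlg : finrank ℝ (repEndAlg ψ) = dimRepHom ψ ψ :=
  (LinearEquiv.ofEq _ _ rfl).finrank_eq

theorem IsIrreducibleRep.bijective_of_ne_zero (hψ : IsIrreducibleRep ψ) {f : V →ₗ[ℝ] V}
    (hf : f ∈ repHom ψ ψ) (hf0 : f ≠ 0) : Function.Bijective f := by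
  have hker : LinearMap.ker f = ⊥ := by
    refine (hψ.2 _ fun g v hv => ?_).resolve_right fun h => hf0 (LinearMap.ker_eq_top.1 h)
    rw [LinearMap.mem_ker] at hv ⊢
    rw [hf g v, hv, map_zero]
  have hrange : LinearMap.range f = ⊤ := by
    refine (hψ.2 _ fun g v hv => ?_).resolve_left fun h => hf0 (LinearMap.range_eq_bot.1 h)
    obtain ⟨u, rfl⟩ := hv
    exact ⟨ψ g u, hf g u⟩
  exact ⟨LinearMap.ker_eq_bot.1 hker, LinearMap.range_eq_top.1 hrange⟩

theorem IsIrreducibleRep.isUnit_or_eq_zero (hψ : IsIrreducibleRep ψ) (a : repEndAlg ψ) :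
    IsUnit a ∨ a = 0 := by
  refine or_iff_not_imp_right.2 fun ha => ?_
  let e := LinearEquiv.ofBijective a.1 (hψ.bijective_of_ne_zero a.2 (by simpa using ha))
  have he : (e.symm : V →ₗ[ℝ] V) ∈ repEndAlg ψ := symm_apply_of_intertwines (e := e) a.2
  exact isUnit_iff_exists.2 ⟨⟨_, he⟩, Subtype.ext (LinearMap.ext e.apply_symm_apply),
    Subtype.ext (LinearMap.ext e.symm_apply_apply)⟩

theorem IsIrreducibleRep.dimRepHom_dvd_resRep (hψ : IsIrreducibleRep ψ) (H : Subgroup G) :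
    dimRepHom ψ ψ ∣ dimRepHom (resRep H ψ) (resRep H ψ) := by
  have : Nontrivial (repEndAlg ψ) := by
    obtain ⟨v, hv⟩ := hψ.1
    exact ⟨1, 0, fun h => hv (by simpa using LinearMap.congr_fun (Subtype.ext_iff.1 h) v)⟩
  let := DivisionRing.ofIsUnitOrEqZero hψ.isUnit_or_eq_zero
  have hle : repEndAlg ψ ≤ repEndAlg (resRep H ψ) := fun f hf h => hf h
  let : Module (repEndAlg ψ) (repEndAlg (resRep H ψ)) :=
    Module.compHom _ (Subalgebra.inclusion hle).toRingHom
  have : IsScalarTower ℝ (repEndAlg ψ) (repEndAlg (resRep H ψ)) :=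
    ⟨fun r a b => by
      show Subalgebra.inclusion hle (r • a) * b = r • (Subalgebra.inclusion hle a * b)
      rw [map_smul, smul_mul_assoc]⟩
  rw [← finrank_repEndAlg, ← finrank_repEndAlg]
  exact Dvd.intro _ (Module.finrank_mul_finrank ℝ _ (repEndAlg (resRep H ψ)))

end Schur

theorem multiplicity_mul_dW_eq_dU_general {K : Type} [Group K] (H : Subgroup K)
    {U : Type} [AddCommGroup U] [Module ℝ U]
    (ρ : Representation ℝ H U) (hirr : IsIrreducibleRep ρ)
    {W : Type} [AddCommGroup W] [Module ℝ W]
    (ψ : Representation ℝ K W)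
    (hext : RepIso (resRep H ψ) ρ) :
    IsIrreducibleRep ψ ∧
      dimRepHom ψ ψ ∣ dimRepHom ψ (indRep H ρ) ∧
      (dimRepHom ψ (indRep H ρ) / dimRepHom ψ ψ) * dimRepHom ψ ψ =
        dimRepHom ρ ρ := by
  have hψ : IsIrreducibleRep ψ := (hirr.of_repIso hext).of_resRep
  have hind : dimRepHom ψ (indRep H ρ) = dimRepHom ρ ρ :=
    dimRepHom_indRep.trans (dimRepHom_congr hext (RepIso.refl ρ))
  have hdvd : dimRepHom ψ ψ ∣ dimRepHom ρ ρ :=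
    dimRepHom_congr hext hext ▸ hψ.dimRepHom_dvd_resRep H
  rw [hind]
  exact ⟨hψ, hdvd, Nat.div_mul_cancel hdvd⟩

/-- Let `H` be an index-two normal subgroup of a finite group `K`, and `U`
an irreducible real `H`-module with `K`-invariant character.  If `W` is a real `K`-module
whose restriction to `H` is isomorphic to `U` (a `K`-extension of `U`), then `W` is
irreducible, and `m(W) · d(W) = d(U)`, where
`m(W) = dim_ℝ Hom_K(W, Ind_H^K U) / d(W)` is the multiplicity of `W` in `Ind_H^K U`
(the division being exact), `d(W) = dim_ℝ Hom_K(W, W)` and `d(U) = dim_ℝ Hom_H(U, U)`. -/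
theorem multiplicity_mul_dW_eq_dU {K : Type} [Group K] [Finite K] (H : Subgroup K)
    [H.Normal] (hidx : H.index = 2) {U : Type} [AddCommGroup U] [Module ℝ U]
    [FiniteDimensional ℝ U] (ρ : Representation ℝ H U) (hirr : IsIrreducibleRep ρ)
    (hinv : charConjInvariant H ρ) {W : Type} [AddCommGroup W] [Module ℝ W]
    [FiniteDimensional ℝ W] (ψ : Representation ℝ K W)
    (hext : RepIso (resRep H ψ) ρ) :
    IsIrreducibleRep ψ ∧
      dimRepHom ψ ψ ∣ dimRepHom ψ (indRep H ρ) ∧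
      (dimRepHom ψ (indRep H ρ) / dimRepHom ψ ψ) * dimRepHom ψ ψ =
        dimRepHom ρ ρ :=
  multiplicity_mul_dW_eq_dU_general H ρ hirr ψ hext
end

section
/- Let H be an index-two normal subgroup of a finite group K and let U be an irreducible real H-module with K-invariant character. If U admits no K-extension, then U is not of quaternionic type, the induced module Ind_H^K U is irreducible, and Ind_H^K U is of complex type if U is of real type, and of quaternionic type if U is of complex type. -/
/-!
Fix `g₀ ∉ H`; evaluation at `1` and at `g₀` identifies `Ind_H^K U`, restricted to `H`, with
`U ⊕ U^{g₀}`. If a `K`-invariant subspace `P` of `Ind U` meets the kernel of evaluation at `1`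
trivially, evaluation at `1` makes `P` an `H`-module isomorphic to `U`, i.e. a `K`-extension of
`U`. Otherwise the values at `g₀` of the elements of `P` vanishing at `1` form a nonzero
`H`-invariant subspace of `U`, hence all of `U`; so `P` contains every function supported on
`H g₀`, and translating by `g₀`, every function supported on `H`. Thus `Ind U` is irreducible.

By Frobenius reciprocity `End_K(Ind U) ≅ Hom_H(U ⊕ U^{g₀}, U)`, and `U^{g₀}` has the character
of `U`, so `d(Ind U) = 2 d(U)`. Schur's lemma makes `End_K(Ind U)` a real division algebra, so
`d(Ind U) ≤ 4` by Frobenius' theorem, which leaves `d(U) ∈ {1, 2}`.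
-/

open Module

open Polynomial

section RealDivisionAlgebra

variable {A : Type*} [Ring A] [Algebra ℝ A] [IsDomain A] [FiniteDimensional ℝ A]

theorem exists_smul_add_mul_self_eq_neg_one {y : A} (hy : y ∉ Set.range (algebraMap ℝ A)) :
    ∃ c d : ℝ, c ≠ 0 ∧ (c • y + d • 1) * (c • y + d • 1) = -1 := by
  have hint : IsIntegral ℝ y := .of_finite ℝ y
  have hirr := minpoly.irreducible hint
  have hdeg : (minpoly ℝ y).natDegree = 2 := by
    have := minpoly.natDegree_pos hint
    have := hirr.natDegree_le_two
    have := mt minpoly.natDegree_eq_one_iff.1 hy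
    omega
  set b := (minpoly ℝ y).coeff 1
  set c := (minpoly ℝ y).coeff 0
  have hP : minpoly ℝ y = X ^ 2 + C b * X + C c := by
    rw [(minpoly.monic hint).as_sum, hdeg]
    simp [Finset.sum_range_succ, b, c]
    ring
  have hy2 : y * y = -(b • y) - c • 1 := by
    have h := minpoly.aeval ℝ y
    rw [hP] at h
    simp only [map_add, map_pow, aeval_X, map_mul, aeval_C, Algebra.algebraMap_eq_smul_one] at h
    rw [← sub_eq_zero, ← h]
    simp only [smul_mul_assoc, one_mul, pow_two]
    abel
  -- a real root of the minimal polynomial would make it reducible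
  have hdisc : discrim 1 b c < 0 := by
    by_contra! h
    obtain ⟨x, hx⟩ := exists_quadratic_eq_zero one_ne_zero
      ⟨√(discrim 1 b c), (Real.mul_self_sqrt h).symm⟩
    have hroot : (minpoly ℝ y).IsRoot x := by
      simp only [hP, IsRoot, eval_add, eval_pow, eval_X, eval_mul, eval_C]
      linear_combination hx
    have := degree_eq_one_of_irreducible_of_root hirr hroot
    rw [degree_eq_natDegree (minpoly.ne_zero hint), hdeg] at this
    exact absurd this (by decide)
  set s := √(-discrim 1 b c)
  have hs : 0 < s := Real.sqrt_pos.2 (by linarith)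
  have hss : s * s = -discrim 1 b c := Real.mul_self_sqrt (by linarith)
  -- complete the square: `(2 y + b) ^ 2 = b ^ 2 - 4 c = -s ^ 2`
  refine ⟨2 / s, b / s, by positivity, ?_⟩
  have expand : ((2 / s) • y + (b / s) • (1 : A)) * ((2 / s) • y + (b / s) • 1) =
      (4 / (s * s)) • (y * y) + (4 * b / (s * s)) • y + (b * b / (s * s)) • (1 : A) := by
    simp only [add_mul, mul_add, smul_mul_assoc, mul_smul_comm, one_mul, mul_one]
    match_scalars <;> ring
  rw [expand, hy2]
  match_scalars
  · ring
  · field_simp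
    rw [discrim] at hss
    linear_combination hss

theorem mem_span_one_of_commute {i y : A} (hi : i * i = -1) (hy : Commute i y) :
    y ∈ Submodule.span ℝ {1, i} := by
  by_cases hyr : y ∈ Set.range (algebraMap ℝ A)
  · obtain ⟨r, rfl⟩ := hyr
    rw [Algebra.algebraMap_eq_smul_one]
    exact Submodule.smul_mem _ _ (Submodule.subset_span (by simp))
  obtain ⟨c, d, hc, hj⟩ := exists_smul_add_mul_self_eq_neg_one hyr
  set j := c • y + d • (1 : A)
  have hij : Commute i j := (hy.smul_right c).add_right ((Commute.one_right i).smul_right d)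
  -- `i * j` squares to `1`, so `j = ± i`
  have hj_mem : j ∈ Submodule.span ℝ {1, i} := by
    have hsq : (i * j) * (i * j) = 1 := by
      rw [hij.symm.mul_mul_mul_comm, hi, hj, neg_one_mul, neg_neg]
    have hi_mem : i ∈ Submodule.span ℝ {(1 : A), i} := Submodule.subset_span (by simp)
    rcases mul_self_eq_one_iff.1 hsq with h | h
    · have : j = -i := by
        have := congrArg (i * ·) h
        simp only [← mul_assoc, hi, neg_one_mul, mul_one] at this
        exact neg_eq_iff_eq_neg.1 this
      rw [this]
      exact Submodule.neg_mem _ hi_mem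
    · have : j = i := by
        have := congrArg (i * ·) h
        simp only [← mul_assoc, hi, neg_one_mul, mul_neg, mul_one, neg_inj] at this
        exact this
      rwa [this]
  have hy_eq : y = c⁻¹ • (j - d • 1) := by
    rw [add_sub_cancel_right, smul_smul, inv_mul_cancel₀ hc, one_smul]
  rw [hy_eq]
  exact Submodule.smul_mem _ _ (Submodule.sub_mem _ hj_mem
    (Submodule.smul_mem _ _ (Submodule.subset_span (by simp))))

theorem finrank_le_four_of_isDomain : finrank ℝ A ≤ 4 := by
  by_cases hreal : ∀ y : A, y ∈ Set.range (algebraMap ℝ A)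
  · have : finrank ℝ A ≤ 1 := finrank_le_one 1 fun y => by
      obtain ⟨r, hr⟩ := hreal y
      exact ⟨r, by rw [← hr, Algebra.algebraMap_eq_smul_one]⟩
    omega
  push Not at hreal
  obtain ⟨x, hx⟩ := hreal
  obtain ⟨c, d, -, hi⟩ := exists_smul_add_mul_self_eq_neg_one hx
  generalize c • x + d • 1 = i at hi
  -- split `A` into the elements commuting and anticommuting with `i`
  set Acomm := LinearMap.ker (LinearMap.mulLeft ℝ i - LinearMap.mulRight ℝ i)
  set Aanti := LinearMap.ker (LinearMap.mulLeft ℝ i + LinearMap.mulRight ℝ i)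
  have mem_comm (y : A) : y ∈ Acomm ↔ i * y = y * i := by
    simp [Acomm, sub_eq_zero]
  have mem_anti (y : A) : y ∈ Aanti ↔ i * y = -(y * i) := by
    simp [Aanti, add_eq_zero_iff_eq_neg]
  have hsup : Acomm ⊔ Aanti = ⊤ := by
    refine eq_top_iff.2 fun y _ => ?_
    have hdecomp : y = (1 / 2 : ℝ) • (y - i * y * i) + (1 / 2 : ℝ) • (y + i * y * i) := by
      module
    have hiyi : i * (i * y * i) = -(y * i) ∧ i * y * i * i = -(i * y) :=
      ⟨by rw [← mul_assoc, ← mul_assoc, hi]; noncomm_ring,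
        by rw [mul_assoc _ i i, hi]; noncomm_ring⟩
    rw [hdecomp]
    refine Submodule.add_mem_sup (Submodule.smul_mem _ _ ?_) (Submodule.smul_mem _ _ ?_)
    · rw [mem_comm, mul_sub, sub_mul, hiyi.1, hiyi.2]
      abel
    · rw [mem_anti, mul_add, add_mul, hiyi.1, hiyi.2]
      abel
  have hcomm : finrank ℝ Acomm ≤ 2 := by
    classical
    calc finrank ℝ Acomm ≤ finrank ℝ (Submodule.span ℝ {1, i}) :=
          Submodule.finrank_mono fun y hy => mem_span_one_of_commute hi ((mem_comm y).1 hy)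
      _ ≤ 2 := (finrank_span_le_card _).trans (by simpa using Finset.card_le_two)
  -- right multiplication by a nonzero anticommuting element embeds `Aanti` into `Acomm`
  have hanti : finrank ℝ Aanti ≤ finrank ℝ Acomm := by
    by_cases hbot : Aanti = ⊥
    · rw [hbot, finrank_bot]
      exact Nat.zero_le _
    obtain ⟨z, hz, hz0⟩ := Submodule.exists_mem_ne_zero_of_ne_bot hbot
    have hmaps : ∀ w ∈ Aanti, w * z ∈ Acomm := fun w hw => by
      rw [mem_anti] at hw hz
      rw [mem_comm, ← mul_assoc, hw, neg_mul, mul_assoc, hz, mul_neg, neg_neg, mul_assoc]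
    exact LinearMap.finrank_le_finrank_of_injective
      (f := (LinearMap.mulRight ℝ z).restrict hmaps)
      fun a b hab => Subtype.ext (mul_right_cancel₀ hz0 (congrArg Subtype.val hab))
  calc finrank ℝ A = finrank ℝ (⊤ : Submodule ℝ A) := finrank_top ℝ A |>.symm
    _ ≤ finrank ℝ Acomm + finrank ℝ Aanti :=
      hsup ▸ Submodule.finrank_add_le_finrank_add_finrank _ _
    _ ≤ 4 := by omega

end RealDivisionAlgebra

section RepresentationLemmas

variable {G U V W : Type*} [Group G] [AddCommGroup U] [Module ℝ U] [AddCommGroup V] [Module ℝ V]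
  [AddCommGroup W] [Module ℝ W]

theorem surjective_of_mem_repHom {α : Representation ℝ G U} {β : Representation ℝ G V}
    (hβ : IsIrreducibleRep β) {T : U →ₗ[ℝ] V} (hT : T ∈ repHom α β) (hT0 : T ≠ 0) :
    Function.Surjective T := by
  rw [← LinearMap.range_eq_top]
  refine (hβ.2 _ fun g v hv => ?_).resolve_left (mt LinearMap.range_eq_bot.1 hT0)
  obtain ⟨u, rfl⟩ := hv
  exact ⟨α g u, hT g u⟩

theorem toSubmodule_centralizer_range (τ : Representation ℝ G W) :
    Subalgebra.toSubmodule (Subalgebra.centralizer ℝ (Set.range τ)) = repHom τ τ := by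
  ext F
  simp only [Subalgebra.mem_toSubmodule, Subalgebra.mem_centralizer_iff, Set.forall_mem_range,
    LinearMap.ext_iff, Module.End.mul_apply]
  exact ⟨fun h g w => (h g w).symm, fun h g w => (h g w).symm⟩

theorem finrank_repHom_self_le_four [FiniteDimensional ℝ W] {τ : Representation ℝ G W}
    (hτ : IsIrreducibleRep τ) : finrank ℝ (repHom τ τ) ≤ 4 := by
  set A := Subalgebra.centralizer ℝ (Set.range τ)
  have hA := toSubmodule_centralizer_range τ
  -- Schur's lemma makes the commutant a domain, so Frobenius' bound applies
  have : NoZeroDivisors A := ⟨fun {a b} hab => or_iff_not_imp_right.2 fun hb => by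
    have hsurj := surjective_of_mem_repHom hτ (hA ▸ b.2 : (b : Module.End ℝ W) ∈ repHom τ τ)
      (by simpa using hb)
    ext w
    obtain ⟨v, rfl⟩ := hsurj w
    simpa using congr(($hab : Module.End ℝ W) v)⟩
  have : Nontrivial A := by
    obtain ⟨w, hw⟩ := hτ.1
    exact nontrivial_of_ne 1 0 fun h => hw (by simpa using congr(($h : Module.End ℝ W) w))
  have : IsDomain A := NoZeroDivisors.to_isDomain A
  rw [← hA, Subalgebra.finrank_toSubmodule]
  exact finrank_le_four_of_isDomain

def repHomEquivIntertwiningMap (α : Representation ℝ G U) (β : Representation ℝ G V) :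
    repHom α β ≃ₗ[ℝ] Representation.IntertwiningMap α β where
  toFun f := f.1.intertwiningMap_of_isIntertwiningMap α β f.2
  invFun φ := ⟨φ.toLinearMap, φ.isIntertwining⟩
  map_add' _ _ := rfl
  map_smul' _ _ := rfl

theorem finrank_repHom_eq_of_trace_eq [Finite G] [FiniteDimensional ℝ U] [FiniteDimensional ℝ V]
    {α β : Representation ℝ G U} (γ : Representation ℝ G V)
    (h : ∀ g, LinearMap.trace ℝ U (α g) = LinearMap.trace ℝ U (β g)) :
    finrank ℝ (repHom α γ) = finrank ℝ (repHom β γ) := by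
  have := Fintype.ofFinite G
  have : Invertible (Nat.card G : ℝ) := invertibleOfNonzero (Nat.cast_ne_zero.2 Nat.card_pos.ne')
  rw [(repHomEquivIntertwiningMap α γ).finrank_eq, (repHomEquivIntertwiningMap β γ).finrank_eq]
  have hα := α.card_inv_mul_sum_char_mul_char_eq_finrank γ
  have hβ := β.card_inv_mul_sum_char_mul_char_eq_finrank γ
  simp only [Representation.character, h] at hα
  exact_mod_cast hα.symm.trans hβ

theorem RepIso.finrank_repHom_eq {α : Representation ℝ G U} {α' : Representation ℝ G W}
    (hα : RepIso α α') (γ : Representation ℝ G V) :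
    finrank ℝ (repHom α γ) = finrank ℝ (repHom α' γ) := by
  obtain ⟨e, he⟩ := hα
  have he' (g : G) (w : W) : e.symm (α' g w) = α g (e.symm w) :=
    e.injective (by rw [he, e.apply_symm_apply, e.apply_symm_apply])
  exact LinearEquiv.finrank_eq
    { toFun f := ⟨f.1 ∘ₗ e.symm.toLinearMap, fun g u => by simp [he', f.2 g]⟩
      invFun f := ⟨f.1 ∘ₗ e.toLinearMap, fun g u => by simp [he, f.2 g]⟩
      map_add' _ _ := rfl
      map_smul' _ _ := rfl
      left_inv f := by ext; simp
      right_inv f := by ext; simp }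

def repHomProdEquiv (α : Representation ℝ G U) (β : Representation ℝ G V)
    (γ : Representation ℝ G W) : repHom (α.prod β) γ ≃ₗ[ℝ] repHom α γ × repHom β γ where
  toFun f := (⟨f.1 ∘ₗ .inl ℝ U V, fun g u => by simpa using f.2 g (u, 0)⟩,
    ⟨f.1 ∘ₗ .inr ℝ U V, fun g v => by simpa using f.2 g (0, v)⟩)
  invFun f := ⟨f.1.1.coprod f.2.1, fun g x => by simp [f.1.2 g, f.2.2 g]⟩
  map_add' _ _ := rfl
  map_smul' _ _ := rfl
  left_inv f := Subtype.ext <| by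
    simp only [← LinearMap.comp_coprod, LinearMap.coprod_inl_inr, LinearMap.comp_id]
  right_inv f := by ext <;> simp

end RepresentationLemmas

section Induced

variable {K U W : Type*} [Group K] {H : Subgroup K} [AddCommGroup U] [Module ℝ U]
  [AddCommGroup W] [Module ℝ W] (ρ : Representation ℝ H U)

theorem exists_repIso_resRep_of_linearEquiv (τ : Representation ℝ K W) (e : W ≃ₗ[ℝ] U)
    (he : ∀ (h : H) (w : W), e (τ h w) = ρ h (e w)) :
    ∃ σ : Representation ℝ K U, RepIso (resRep H σ) ρ :=
  ⟨(e.conjAlgEquiv ℝ).toMonoidHom.comp τ, LinearEquiv.refl ℝ U, fun h u => by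
    simp [resRep, LinearEquiv.conjAlgEquiv_apply, he]⟩

def conjRep [H.Normal] (g : K) : Representation ℝ H U :=
  ρ.comp (MulAut.conjNormal g).toMonoidHom

theorem finrank_repHom_conjRep [Finite K] [FiniteDimensional ℝ U] [H.Normal]
    (hρ : charConjInvariant H ρ) (g : K) :
    finrank ℝ (repHom (conjRep ρ g) ρ) = finrank ℝ (repHom ρ ρ) :=
  finrank_repHom_eq_of_trace_eq ρ fun h =>
    hρ g⁻¹ h (MulAut.conjNormal g h) (by simp [MulAut.conjNormal_apply])

@[simp]
theorem indRep_apply_apply (g : K) (f : indSubmodule H ρ) (k : K) :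
    (indRep H ρ g f : K → U) k = (f : K → U) (k * g) := rfl

theorem indSubmodule_apply_eq (f : indSubmodule H ρ) {k g : K} (hkg : k * g⁻¹ ∈ H) :
    (f : K → U) k = ρ ⟨k * g⁻¹, hkg⟩ ((f : K → U) g) := by
  simpa using f.2 ⟨k * g⁻¹, hkg⟩ g

theorem indSubmodule_apply_coe (f : indSubmodule H ρ) (h : H) :
    (f : K → U) h = ρ h ((f : K → U) 1) := by
  simpa using f.2 h 1

def indEval (k : K) : indSubmodule H ρ →ₗ[ℝ] U :=
  (LinearMap.proj k).comp (indSubmodule H ρ).subtype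

@[simp]
theorem indEval_apply (k : K) (f : indSubmodule H ρ) : indEval ρ k f = (f : K → U) k := rfl

open Classical in
noncomputable def indSingle (g : K) : U →ₗ[ℝ] indSubmodule H ρ where
  toFun u := ⟨fun k => if hk : k * g⁻¹ ∈ H then ρ ⟨k * g⁻¹, hk⟩ u else 0, fun h k => by
    dsimp only
    by_cases hk : k * g⁻¹ ∈ H
    · rw [dif_pos hk, dif_pos (by simpa [mul_assoc] using H.mul_mem h.2 hk),
        ← Module.End.mul_apply, ← map_mul]
      congr 2
      exact Subtype.ext (mul_assoc _ _ _)
    · rw [dif_neg hk, dif_neg (by rwa [mul_assoc, Subgroup.mul_mem_cancel_left _ h.2]), map_zero]⟩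
  map_add' _ _ := by ext k; by_cases hk : k * g⁻¹ ∈ H <;> simp [hk]
  map_smul' _ _ := by ext; simp

theorem indSingle_apply_of_mem {g k : K} (hk : k * g⁻¹ ∈ H) (u : U) :
    (indSingle ρ g u : K → U) k = ρ ⟨k * g⁻¹, hk⟩ u := dif_pos hk

theorem indSingle_apply_of_notMem {g k : K} (hk : k * g⁻¹ ∉ H) (u : U) :
    (indSingle ρ g u : K → U) k = 0 := dif_neg hk

@[simp]
theorem indSingle_apply_self (g : K) (u : U) : (indSingle ρ g u : K → U) g = u := by
  simp [indSingle]
  exact congr($(map_one ρ) u)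

theorem indSingle_apply_one {g : K} (hg : g ∉ H) (u : U) : (indSingle ρ g u : K → U) 1 = 0 :=
  indSingle_apply_of_notMem ρ (by simpa using hg) u

theorem indSingle_one_apply {g : K} (hg : g ∉ H) (u : U) : (indSingle ρ 1 u : K → U) g = 0 :=
  indSingle_apply_of_notMem ρ (by simpa using hg) u

theorem indRep_indSingle (g g' : K) (u : U) :
    indRep H ρ g (indSingle ρ g' u) = indSingle ρ (g' * g⁻¹) u := by
  ext k
  have hk : k * g * g'⁻¹ = k * (g' * g⁻¹)⁻¹ := by group
  by_cases hmem : k * g * g'⁻¹ ∈ H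
  · rw [indRep_apply_apply, indSingle_apply_of_mem ρ hmem, indSingle_apply_of_mem ρ (hk ▸ hmem)]
    simp only [hk]
  · rw [indRep_apply_apply, indSingle_apply_of_notMem ρ hmem,
      indSingle_apply_of_notMem ρ (hk ▸ hmem)]

def repHomIndEquiv (τ : Representation ℝ K W) :
    repHom τ (indRep H ρ) ≃ₗ[ℝ] repHom (resRep H τ) ρ where
  toFun φ := ⟨indEval ρ 1 ∘ₗ φ.1, fun h w => by
    simpa [resRep, φ.2 h w] using indSubmodule_apply_coe ρ (φ.1 w) h⟩
  invFun ψ := ⟨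
    { toFun w := ⟨fun k => ψ.1 (τ k w), fun h k => by simpa [resRep] using ψ.2 h (τ k w)⟩
      map_add' _ _ := by ext; simp
      map_smul' _ _ := by ext; simp },
    fun g w => by ext; simp⟩
  map_add' _ _ := rfl
  map_smul' _ _ := rfl
  left_inv φ := by ext w k; simp [φ.2 k w]
  right_inv ψ := by ext; simp

theorem exists_repIso_resRep_of_disjoint_ker (hρ : IsIrreducibleRep ρ)
    {p : Submodule ℝ (indSubmodule H ρ)} (hp : ∀ (g : K) f, f ∈ p → indRep H ρ g f ∈ p)
    (hne : p ≠ ⊥) (hdisj : Disjoint p (LinearMap.ker (indEval ρ 1))) :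
    ∃ σ : Representation ℝ K U, RepIso (resRep H σ) ρ := by
  let τ := Subrepresentation.toRepresentation ⟨p, fun g _ hf => hp g _ hf⟩
  let ev := indEval ρ 1 ∘ₗ p.subtype
  have hev (h : H) (f : p) : ev (τ h f) = ρ h (ev f) := by
    simpa [ev, τ, Subrepresentation.toRepresentation] using indSubmodule_apply_coe ρ f.1 h
  have hev_inj : Function.Injective ev := by
    apply (injective_iff_map_eq_zero _).2
    exact fun f hf => Subtype.ext (Submodule.disjoint_def.1 hdisj f f.2 hf)
  have hev_surj : Function.Surjective ev := by
    rw [← LinearMap.range_eq_top]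
    refine (hρ.2 _ ?_).resolve_left fun h0 => hne (eq_bot_iff.2 fun f hf => ?_)
    · rintro h _ ⟨f, rfl⟩
      exact ⟨_, hev h f⟩
    · exact Submodule.disjoint_def.1 hdisj f hf congr($(LinearMap.range_eq_bot.1 h0) ⟨f, hf⟩)
  exact exists_repIso_resRep_of_linearEquiv (W := p) ρ τ (.ofBijective ev ⟨hev_inj, hev_surj⟩) hev

theorem exists_notMem_of_index_eq_two (hidx : H.index = 2) : ∃ g, g ∉ H :=
  SetLike.exists_not_mem_of_ne_top H fun h => by simp [h] at hidx

section IndexTwo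

variable (hidx : H.index = 2) {g₀ : K} (hg₀ : g₀ ∉ H)
include hidx hg₀

theorem indSubmodule_ext {f f' : indSubmodule H ρ} (h1 : (f : K → U) 1 = (f' : K → U) 1)
    (hg₀f : (f : K → U) g₀ = (f' : K → U) g₀) : f = f' := by
  ext k
  by_cases hk : k ∈ H
  · have hk' : k * 1⁻¹ ∈ H := by simpa using hk
    rw [indSubmodule_apply_eq ρ f hk', indSubmodule_apply_eq ρ f' hk', h1]
  · have hk' : k * g₀⁻¹ ∈ H :=
      (Subgroup.mul_mem_iff_of_index_two hidx).2 (iff_of_false hk (by simpa using hg₀))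
    rw [indSubmodule_apply_eq ρ f hk', indSubmodule_apply_eq ρ f' hk', hg₀f]

theorem indSingle_one_add_indSingle (f : indSubmodule H ρ) :
    indSingle ρ 1 ((f : K → U) 1) + indSingle ρ g₀ ((f : K → U) g₀) = f := by
  apply indSubmodule_ext ρ hidx hg₀ <;>
    simp [indSingle_apply_one ρ hg₀, indSingle_one_apply ρ hg₀]

noncomputable def indEquivProd : indSubmodule H ρ ≃ₗ[ℝ] U × U :=
  LinearEquiv.ofLinearMap ((indEval ρ 1).prod (indEval ρ g₀))
    ((indSingle ρ 1).coprod (indSingle ρ g₀))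
    (by ext <;> simp [indSingle_apply_one ρ hg₀, indSingle_one_apply ρ hg₀])
    (LinearMap.ext fun f => indSingle_one_add_indSingle ρ hidx hg₀ f)

theorem repIso_resRep_indRep [H.Normal] :
    RepIso (resRep H (indRep H ρ)) (ρ.prod (conjRep ρ g₀)) := by
  refine ⟨indEquivProd ρ hidx hg₀, fun h f => Prod.ext ?_ ?_⟩
  · simpa [indEquivProd, resRep] using indSubmodule_apply_coe ρ f h
  · have hconj : g₀ * h * g₀⁻¹ ∈ H := (MulAut.conjNormal g₀ h).2
    have hconj' : (⟨_, hconj⟩ : H) = MulAut.conjNormal g₀ h :=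
      Subtype.ext (MulAut.conjNormal_apply g₀ h).symm
    simpa [indEquivProd, resRep, conjRep, hconj'] using indSubmodule_apply_eq ρ f hconj

theorem eq_top_of_inf_ker_ne_bot (hρ : IsIrreducibleRep ρ) {p : Submodule ℝ (indSubmodule H ρ)}
    (hp : ∀ (g : K) f, f ∈ p → indRep H ρ g f ∈ p)
    (hker : p ⊓ LinearMap.ker (indEval ρ 1) ≠ ⊥) : p = ⊤ := by
  have mem_inf_ker (f) : f ∈ p ⊓ LinearMap.ker (indEval ρ 1) ↔ f ∈ p ∧ (f : K → U) 1 = 0 :=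
    Iff.rfl
  -- the values at `g₀` of the elements of `p` vanishing at `1` form a `ρ`-invariant subspace
  set V := (p ⊓ LinearMap.ker (indEval ρ 1)).map (indEval ρ g₀)
  have hV : V = ⊤ := by
    refine (hρ.2 V ?_).resolve_left ?_
    · rintro h _ ⟨f, hf, rfl⟩
      rw [SetLike.mem_coe, mem_inf_ker] at hf
      let x : H := ⟨g₀⁻¹ * h * g₀, by
        simpa using (Subgroup.normal_of_index_eq_two hidx).conj_mem _ h.2 g₀⁻¹⟩
      refine ⟨indRep H ρ x f, (mem_inf_ker _).2 ⟨hp _ _ hf.1, ?_⟩, ?_⟩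
      · simpa [hf.2] using indSubmodule_apply_coe ρ f x
      · simpa [x, mul_assoc] using f.2 h g₀
    · obtain ⟨f, hf, hf0⟩ := Submodule.exists_mem_ne_zero_of_ne_bot hker
      rw [Submodule.eq_bot_iff]
      refine fun hV0 => hf0 (indSubmodule_ext ρ hidx hg₀ (by simpa using ((mem_inf_ker f).1 hf).2)
        (by simpa using hV0 _ ⟨f, hf, rfl⟩))
  have hsingle (u : U) : indSingle ρ g₀ u ∈ p := by
    obtain ⟨f, hf, rfl⟩ := hV ▸ Submodule.mem_top (x := u)
    rw [SetLike.mem_coe, mem_inf_ker] at hf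
    convert hf.1 using 1
    exact indSubmodule_ext ρ hidx hg₀ (by simp [indSingle_apply_one ρ hg₀, hf.2]) (by simp)
  refine eq_top_iff.2 fun f _ => ?_
  rw [← indSingle_one_add_indSingle ρ hidx hg₀ f]
  refine p.add_mem ?_ (hsingle _)
  simpa [indRep_indSingle] using hp g₀ _ (hsingle ((f : K → U) 1))

end IndexTwo

theorem isIrreducibleRep_indRep (hidx : H.index = 2) (hρ : IsIrreducibleRep ρ)
    (hext : ¬ ∃ σ : Representation ℝ K U, RepIso (resRep H σ) ρ) :
    IsIrreducibleRep (indRep H ρ) := by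
  obtain ⟨g₀, hg₀⟩ := exists_notMem_of_index_eq_two hidx
  obtain ⟨u, hu⟩ := hρ.1
  refine ⟨⟨indSingle ρ 1 u, fun h => hu (by simpa using congr(indEval ρ 1 $h))⟩, fun p hp => ?_⟩
  by_cases hdisj : Disjoint p (LinearMap.ker (indEval ρ 1))
  · exact (eq_or_ne p ⊥).imp_right fun hne =>
      (hext (exists_repIso_resRep_of_disjoint_ker ρ hρ hp hne hdisj)).elim
  · exact .inr (eq_top_of_inf_ker_ne_bot ρ hidx hg₀ hρ hp (disjoint_iff.not.1 hdisj))

theorem finrank_repHom_indRep_self [Finite K] [FiniteDimensional ℝ U] (hidx : H.index = 2)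
    (hρ : charConjInvariant H ρ) :
    finrank ℝ (repHom (indRep H ρ) (indRep H ρ)) = 2 * finrank ℝ (repHom ρ ρ) := by
  have := Subgroup.normal_of_index_eq_two hidx
  obtain ⟨g₀, hg₀⟩ := exists_notMem_of_index_eq_two hidx
  calc finrank ℝ (repHom (indRep H ρ) (indRep H ρ))
      = finrank ℝ (repHom (resRep H (indRep H ρ)) ρ) := (repHomIndEquiv ρ _).finrank_eq
    _ = finrank ℝ (repHom (ρ.prod (conjRep ρ g₀)) ρ) :=
      (repIso_resRep_indRep ρ hidx hg₀).finrank_repHom_eq ρ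
    _ = finrank ℝ (repHom ρ ρ) + finrank ℝ (repHom (conjRep ρ g₀) ρ) := by
      rw [(repHomProdEquiv _ _ _).finrank_eq, finrank_prod]
    _ = 2 * finrank ℝ (repHom ρ ρ) := by rw [finrank_repHom_conjRep ρ hρ, two_mul]

end Induced

theorem induced_of_nonextendible_general {K : Type} [Group K] [Finite K] (H : Subgroup K)
    (hidx : H.index = 2) {U : Type} [AddCommGroup U] [Module ℝ U]
    [FiniteDimensional ℝ U] (ρ : Representation ℝ H U) (hirr : IsIrreducibleRep ρ)
    (hinv : charConjInvariant H ρ)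
    (hnoext : ¬ ∃ σ : Representation ℝ K U, RepIso (resRep H σ) ρ) :
    dimRepHom ρ ρ ≠ 4 ∧
    IsIrreducibleRep (indRep H ρ) ∧
    (dimRepHom ρ ρ = 1 → dimRepHom (indRep H ρ) (indRep H ρ) = 2) ∧
    (dimRepHom ρ ρ = 2 → dimRepHom (indRep H ρ) (indRep H ρ) = 4) := by
  have hind := isIrreducibleRep_indRep ρ hidx hirr hnoext
  have hdim := finrank_repHom_indRep_self ρ hidx hinv
  have hle := finrank_repHom_self_le_four hind
  unfold dimRepHom
  refine ⟨?_, hind, ?_, ?_⟩ <;> omega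

/-- Let `H` be an index-two normal subgroup of a finite group `K` and `U`
an irreducible real `H`-module with `K`-invariant character.  If `U` admits no
`K`-extension, then `U` is not of quaternionic type (`d(U) ≠ 4`), the induced module
`Ind_H^K U` is irreducible, and `Ind_H^K U` is of complex type (`d = 2`) if `U` is of real
type (`d(U) = 1`), and of quaternionic type (`d = 4`) if `U` is of complex type
(`d(U) = 2`). -/
theorem induced_of_nonextendible {K : Type} [Group K] [Finite K] (H : Subgroup K)
    [H.Normal] (hidx : H.index = 2) {U : Type} [AddCommGroup U] [Module ℝ U]
    [FiniteDimensional ℝ U] (ρ : Representation ℝ H U) (hirr : IsIrreducibleRep ρ)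
    (hinv : charConjInvariant H ρ)
    (hnoext : ¬ ∃ σ : Representation ℝ K U, RepIso (resRep H σ) ρ) :
    dimRepHom ρ ρ ≠ 4 ∧
    IsIrreducibleRep (indRep H ρ) ∧
    (dimRepHom ρ ρ = 1 → dimRepHom (indRep H ρ) (indRep H ρ) = 2) ∧
    (dimRepHom ρ ρ = 2 → dimRepHom (indRep H ρ) (indRep H ρ) = 4) :=
  induced_of_nonextendible_general H hidx ρ hirr hinv hnoext
end

section
/- Let H be a normal subgroup of a finite group G with G/H cyclic of odd order, and let U be an irreducible real H-module of real type whose character is G-invariant. Then any two G-extensions of U are isomorphic as G-modules. -/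
open Module

/-!
Two extensions of `U` differ by an `H`-equivariant isomorphism `f₀ : V₁ → V₂`. Since `U` is of
real type, `Hom_H(V₁, V₂)` is a line, and conjugation by `G` makes it a representation of `G/H`.
A group of odd order `n` acts on a real line through scalars `c` with `c ^ n = 1`, i.e. trivially;
hence `f₀` is `G`-equivariant.
-/

section RepHom

variable {G V₁ V₂ V₃ : Type*} [Group G] [AddCommGroup V₁] [Module ℝ V₁] [AddCommGroup V₂]
  [Module ℝ V₂] [AddCommGroup V₃] [Module ℝ V₃]
  {ψ₁ : Representation ℝ G V₁} {ψ₂ : Representation ℝ G V₂} {ψ₃ : Representation ℝ G V₃}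

theorem comp_mem_repHom {f : V₁ →ₗ[ℝ] V₂} {f' : V₂ →ₗ[ℝ] V₃} (hf : f ∈ repHom ψ₁ ψ₂)
    (hf' : f' ∈ repHom ψ₂ ψ₃) : f' ∘ₗ f ∈ repHom ψ₁ ψ₃ := fun g u => by
  rw [LinearMap.comp_apply, hf g u, hf' g (f u), LinearMap.comp_apply]

theorem symm_mem_repHom {e : V₁ ≃ₗ[ℝ] V₂} (he : (e : V₁ →ₗ[ℝ] V₂) ∈ repHom ψ₁ ψ₂) :
    (e.symm : V₂ →ₗ[ℝ] V₁) ∈ repHom ψ₂ ψ₁ := fun g v => by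
  apply e.injective
  simpa using (he g (e.symm v)).symm

theorem repHom_eq_invariants_linHom (ψ₁ : Representation ℝ G V₁) (ψ₂ : Representation ℝ G V₂) :
    repHom ψ₁ ψ₂ = (Representation.linHom ψ₁ ψ₂).invariants := by
  ext f
  exact ((Representation.isIntertwiningMap_iff ψ₁ ψ₂ f).symm.trans
    (Representation.mem_linHom_invariants_iff_isIntertwining f).symm)

end RepHom

theorem dimRepHom_congr_s7 {G V₁ V₂ W₁ W₂ : Type*} [Group G] [AddCommGroup V₁] [Module ℝ V₁]
    [AddCommGroup V₂] [Module ℝ V₂] [AddCommGroup W₁] [Module ℝ W₁] [AddCommGroup W₂]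
    [Module ℝ W₂] {ψ₁ : Representation ℝ G V₁} {ψ₂ : Representation ℝ G V₂}
    {ρ₁ : Representation ℝ G W₁} {ρ₂ : Representation ℝ G W₂} (h₁ : RepIso ψ₁ ρ₁)
    (h₂ : RepIso ψ₂ ρ₂) : dimRepHom ψ₁ ψ₂ = dimRepHom ρ₁ ρ₂ := by
  obtain ⟨e₁, he₁ : (e₁ : V₁ →ₗ[ℝ] W₁) ∈ repHom ψ₁ ρ₁⟩ := h₁
  obtain ⟨e₂, he₂ : (e₂ : V₂ →ₗ[ℝ] W₂) ∈ repHom ψ₂ ρ₂⟩ := h₂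
  refine LinearEquiv.finrank_eq (LinearEquiv.ofSubmodules (e₁.arrowCongr e₂) _ _ ?_)
  refine le_antisymm (Submodule.map_le_iff_le_comap.2 fun f hf => ?_) fun f hf => ?_
  · exact comp_mem_repHom (symm_mem_repHom he₁) (comp_mem_repHom hf he₂)
  · rw [Submodule.map_equiv_eq_comap_symm]
    exact comp_mem_repHom he₁ (comp_mem_repHom hf (symm_mem_repHom he₂))

namespace Representation

theorem apply_eq_self_of_finrank_eq_one_of_odd_card {k Q W : Type*} [Field k] [LinearOrder k]
    [IsStrictOrderedRing k] [Group Q] [AddCommGroup W] [Module k W] (π : Representation k Q W)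
    (hW : finrank k W = 1) (hQ : Odd (Nat.card Q)) (q : Q) (w : W) : π q w = w := by
  obtain ⟨c, hc, -⟩ := LinearMap.existsUnique_eq_smul_id_of_finrank_eq_one hW (π q)
  have : Nontrivial W := Module.nontrivial_of_finrank_eq_succ hW
  obtain ⟨w₀, hw₀⟩ := exists_ne (0 : W)
  have hcn : c ^ Nat.card Q • w₀ = (1 : k) • w₀ := by
    have h := congr($(map_pow π q (Nat.card Q)) w₀)
    rw [pow_card_eq_one', map_one, hc, ← Module.End.one_eq_id, smul_pow, one_pow] at h
    simpa using h.symm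
  have hc1 : c = 1 := hQ.pow_injective ((smul_left_injective k hw₀ hcn).trans (one_pow _).symm)
  rw [hc, hc1, one_smul, LinearMap.id_apply]

theorem invariants_comp_subtype_eq_invariants {k G V : Type*} [Field k] [LinearOrder k]
    [IsStrictOrderedRing k] [Group G] [AddCommGroup V] [Module k V] (ρ : Representation k G V)
    (H : Subgroup G) [H.Normal] (hH : Odd (Nat.card (G ⧸ H)))
    (h1 : finrank k (invariants (ρ.comp H.subtype)) = 1) :
    invariants (ρ.comp H.subtype) = invariants ρ := by
  refine le_antisymm (fun v hv g => ?_) fun v hv h => hv h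
  have h := (ρ.quotientToInvariants H).apply_eq_self_of_finrank_eq_one_of_odd_card h1 hH g ⟨v, hv⟩
  simpa using congr(Subtype.val $h)

end Representation

theorem repHom_resRep_eq_repHom {G V₁ V₂ : Type*} [Group G] [AddCommGroup V₁] [Module ℝ V₁]
    [AddCommGroup V₂] [Module ℝ V₂] (H : Subgroup G) [H.Normal] (hH : Odd (Nat.card (G ⧸ H)))
    (σ₁ : Representation ℝ G V₁) (σ₂ : Representation ℝ G V₂)
    (h1 : dimRepHom (resRep H σ₁) (resRep H σ₂) = 1) :
    repHom (resRep H σ₁) (resRep H σ₂) = repHom σ₁ σ₂ := by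
  rw [dimRepHom, repHom_eq_invariants_linHom] at h1
  rw [repHom_eq_invariants_linHom, repHom_eq_invariants_linHom]
  exact (Representation.linHom σ₁ σ₂).invariants_comp_subtype_eq_invariants H hH h1

theorem unique_extension_odd_cyclic_general {G : Type} [Group G] (H : Subgroup G)
    [H.Normal] (hodd : Odd (Nat.card (G ⧸ H)))
    {U : Type} [AddCommGroup U] [Module ℝ U]
    (ρ : Representation ℝ H U)
    (hreal : dimRepHom ρ ρ = 1) :
    ∀ (V₁ : Type) [AddCommGroup V₁] [Module ℝ V₁] (V₂ : Type) [AddCommGroup V₂]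
      [Module ℝ V₂] (σ₁ : Representation ℝ G V₁) (σ₂ : Representation ℝ G V₂),
      RepIso (resRep H σ₁) ρ → RepIso (resRep H σ₂) ρ → RepIso σ₁ σ₂ := by
  intro V₁ _ _ V₂ _ _ σ₁ σ₂ h₁ h₂
  have hdim : dimRepHom (resRep H σ₁) (resRep H σ₂) = 1 := (dimRepHom_congr_s7 h₁ h₂).trans hreal
  obtain ⟨e₁, he₁⟩ := h₁
  obtain ⟨e₂, he₂⟩ := h₂
  have hf₀ : ((e₁.trans e₂.symm : V₁ ≃ₗ[ℝ] V₂) : V₁ →ₗ[ℝ] V₂) ∈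
      repHom (resRep H σ₁) (resRep H σ₂) :=
    comp_mem_repHom he₁ (symm_mem_repHom he₂)
  rw [repHom_resRep_eq_repHom H hodd σ₁ σ₂ hdim] at hf₀
  exact ⟨e₁.trans e₂.symm, hf₀⟩

/-- Let `H` be a normal subgroup of a finite group `G` with `G/H` cyclic
of odd order, and let `U` be an irreducible real `H`-module of real type (`d(U) = 1`)
whose character is `G`-invariant.  Then any two `G`-extensions of `U` are isomorphic as
`G`-modules. -/
theorem unique_extension_odd_cyclic {G : Type} [Group G] [Finite G] (H : Subgroup G)
    [H.Normal] (hcyc : IsCyclic (G ⧸ H)) (hodd : Odd (Nat.card (G ⧸ H)))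
    {U : Type} [AddCommGroup U] [Module ℝ U] [FiniteDimensional ℝ U]
    (ρ : Representation ℝ H U) (hirr : IsIrreducibleRep ρ)
    (hreal : dimRepHom ρ ρ = 1) (hinv : charConjInvariant H ρ) :
    ∀ (V₁ : Type) [AddCommGroup V₁] [Module ℝ V₁] (V₂ : Type) [AddCommGroup V₂]
      [Module ℝ V₂] (σ₁ : Representation ℝ G V₁) (σ₂ : Representation ℝ G V₂),
      RepIso (resRep H σ₁) ρ → RepIso (resRep H σ₂) ρ → RepIso σ₁ σ₂ :=
  unique_extension_odd_cyclic_general H hodd ρ hreal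
end
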